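/- arXiv:2007.05789 — 2 statements merged into one kernel-verified Lean document; each statement's English description precedes it below -/
import Mathlib

section
/- (Completeness of the even-odd abstraction.) Let P be a symmetric rendez-vous protocol and n ∈ ℕ. If C_i^(n) →* C_f^(n) and n is even, then (q_i^L, γ_i^E) ⇝* (q_f^L, γ_f^E); if C_i^(n) →* C_f^(n) and n is odd, then (q_i^L, γ_i^O) ⇝* (q_f^L, γ_f^O). -/
/-- Actions labelling edges of a rendez-vous protocol: request (`recv`, written `?a`)
or answer (`send`, written `!a`). -/
inductive RVAct (A : Type) : Type
  | send : A → RVAct A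
  | recv : A → RVAct A

/-- A rendez-vous protocol: a finite set of states `Q` partitioned (via `isLeader`)
into process states and leader states, a finite alphabet `A`, initial/final states for
processes and for the leader, and a set of edges staying within each part. -/
structure RVProtocol (Q A : Type) : Type where
  isLeader : Q → Bool
  qi : Q
  qf : Q
  qiL : Q
  qfL : Q
  hqi : isLeader qi = false
  hqf : isLeader qf = false
  hqiL : isLeader qiL = true
  hqfL : isLeader qfL = true
  E : Set (Q × RVAct A × Q)
  hE : ∀ e ∈ E, isLeader e.1 = isLeader e.2.2

namespace RVProtocol

variable {Q A : Type} [DecidableEq Q] (P : RVProtocol Q A)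

/-- A configuration is a multiset of states with exactly one occurrence of a leader state. -/
def IsConfig (C : Multiset Q) : Prop :=
  (C.filter (fun q => P.isLeader q = true)).card = 1

/-- One rendez-vous step between configurations. -/
def Step (C C' : Multiset Q) : Prop :=
  ∃ (a : A) (q1 q2 q1' q2' : Q),
    (q1, RVAct.recv a, q2) ∈ P.E ∧ (q1', RVAct.send a, q2') ∈ P.E ∧
    0 < C.count q1 ∧ 0 < C.count q1' ∧ 2 ≤ C.count q1 + C.count q1' ∧
    C' = C - {q1, q1'} + {q2, q2'}

/-- Reachability: reflexive-transitive closure of `Step`. -/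
def Reach : Multiset Q → Multiset Q → Prop := Relation.ReflTransGen P.Step

/-- The initial configuration with `n` processes. -/
def Ci (n : ℕ) : Multiset Q := Multiset.replicate n P.qi + {P.qiL}

/-- The final configuration with `n` processes. -/
def Cf (n : ℕ) : Multiset Q := Multiset.replicate n P.qf + {P.qfL}

/-! The Petri net `N_P` associated to a protocol `P`: one place per state of `Q`
(markings are functions `Q → ℕ`), a transition `t_i` producing a token in `p_{q_i}`,
a transition `t_f^L` consuming a token from `p_{q_f^L}`, and for every pair of edges
`(q1,!a,q1')`, `(q2,?a,q2')` a transition with precondition `p_{q1} + p_{q2}` and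
postcondition `p_{q1'} + p_{q2'}`.  We describe it by its firing relation. -/
def NPStep (M M' : Q → ℕ) : Prop :=
  -- transition `t_i`
  (M' = M + Pi.single P.qi 1) ∨
  -- transition `t_f^L`
  (Pi.single P.qfL 1 ≤ M ∧ M' = M - Pi.single P.qfL 1) ∨
  -- rendez-vous transitions
  (∃ (a : A) (q1 q2 q1' q2' : Q),
    (q1, RVAct.send a, q1') ∈ P.E ∧ (q2, RVAct.recv a, q2') ∈ P.E ∧
    Pi.single q1 1 + Pi.single q2 1 ≤ M ∧
    M' = M - (Pi.single q1 1 + Pi.single q2 1) + (Pi.single q1' 1 + Pi.single q2' 1))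

/-- Reachability in the Petri net `N_P`. -/
def NPReach : (Q → ℕ) → (Q → ℕ) → Prop := Relation.ReflTransGen P.NPStep

/-- The initial marking `M_0` of `N_P`: one token in `p_{q_i^L}`, none elsewhere. -/
def M0 : Q → ℕ := Pi.single P.qiL 1

/-- The marking `M_f^{(n)}`: `n` tokens in `p_{q_f}`, none elsewhere. -/
def Mf (n : ℕ) : Q → ℕ := Pi.single P.qf n

end RVProtocol


namespace RVProtocol

variable {Q A : Type} (P : RVProtocol Q A)

/-- A rendez-vous protocol is symmetric when `(q,!a,q') ∈ E` iff `(q,?a,q') ∈ E`;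
such an edge is then written `(q,a,q')`. -/
def IsSymmetric : Prop :=
  ∀ (q : Q) (a : A) (q' : Q), (q, RVAct.send a, q') ∈ P.E ↔ (q, RVAct.recv a, q') ∈ P.E

/-- The edge relation of the underlying graph of the protocol: there is an edge from
`q` to `q'` whenever `(q,a,q') ∈ E` for some letter `a`. -/
def Adj (q q' : Q) : Prop := ∃ a : A, (q, RVAct.send a, q') ∈ P.E

/-- Every process state is on a path from `q_i` to `q_f` in the underlying graph. -/
def Connected : Prop :=
  ∀ q : Q, P.isLeader q = false →
    Relation.ReflTransGen P.Adj P.qi q ∧ Relation.ReflTransGen P.Adj q P.qf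

end RVProtocol

/-- Flip the parity values (`false` = even `E`, `true` = odd `O`) of `γ` at `x1` and `x2`,
with no change at all if `x1 = x2`. -/
def flipTwo {X : Type} [DecidableEq X] (γ : X → Bool) (x1 x2 : X) : X → Bool :=
  if x1 = x2 then γ
  else fun x => if x = x1 ∨ x = x2 then !(γ x) else γ x

namespace RVProtocol

variable {Q A : Type} [DecidableEq Q] (P : RVProtocol Q A)

/-- The process states `Q_P` of the protocol. -/
abbrev ProcState : Type := {q : Q // P.isLeader q = false}

/-- The leader states `Q_L` of the protocol. -/
abbrev LeadState : Type := {q : Q // P.isLeader q = true}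

/-- Even-odd abstract configurations: a leader state together with a parity
(`false` = even `E`, `true` = odd `O`) for each process state. -/
abbrev AbsConf : Type := P.LeadState × (P.ProcState → Bool)

/-- One step of the even-odd abstraction: either the leader takes an edge together with
one process (case 1), or two processes perform a rendez-vous (case 2); the parities are
updated by flipping at the (distinct) endpoints of each edge used. -/
def EOStep (c1 c2 : P.AbsConf) : Prop :=
  (∃ (a : A) (q1 q2 : P.ProcState),
      ((c1.1 : Q), RVAct.send a, (c2.1 : Q)) ∈ P.E ∧
      ((q1 : Q), RVAct.send a, (q2 : Q)) ∈ P.E ∧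
      c2.2 = flipTwo c1.2 q1 q2) ∨
  (c1.1 = c2.1 ∧
    ∃ (a : A) (q1 q2 q3 q4 : P.ProcState),
      ((q1 : Q), RVAct.send a, (q2 : Q)) ∈ P.E ∧
      ((q3 : Q), RVAct.send a, (q4 : Q)) ∈ P.E ∧
      c2.2 = flipTwo (flipTwo c1.2 q1 q2) q3 q4)

/-- Reachability in the even-odd abstraction. -/
def EOReach : P.AbsConf → P.AbsConf → Prop := Relation.ReflTransGen P.EOStep

/-- The abstract configuration `(q_i^L, γ_i^E)`: all parities even. -/
def absIE : P.AbsConf := (⟨P.qiL, P.hqiL⟩, fun _ => false)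

/-- The abstract configuration `(q_f^L, γ_f^E)`: all parities even. -/
def absFE : P.AbsConf := (⟨P.qfL, P.hqfL⟩, fun _ => false)

/-- The abstract configuration `(q_i^L, γ_i^O)`: parity odd exactly at `q_i`. -/
def absIO : P.AbsConf := (⟨P.qiL, P.hqiL⟩, fun q => decide ((q : Q) = P.qi))

/-- The abstract configuration `(q_f^L, γ_f^O)`: parity odd exactly at `q_f`. -/
def absFO : P.AbsConf := (⟨P.qfL, P.hqfL⟩, fun q => decide ((q : Q) = P.qf))

/-- The concretization `[[(q^L, γ)]]` of an abstract configuration: configurations `C`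
with `C(q^L) = 1` and, for each process state `q`, `C(q)` even iff `γ(q) = E`. -/
def Interp (c : P.AbsConf) (C : Multiset Q) : Prop :=
  P.IsConfig C ∧ C.count (c.1 : Q) = 1 ∧
    ∀ q : P.ProcState, (Even (C.count (q : Q)) ↔ c.2 q = false)

end RVProtocol

/-! A concrete configuration `C` determines its abstraction: the unique leader state in `C`
and the parity of the count of every process state. A rendez-vous step that removes two tokens
actually present in `C` changes the counts only at the four endpoints of the two edges used, so it
flips exactly the parities that the corresponding abstract step flips, and a leader edge moves the
leader state along it; symmetry lets the receiving edge be read as an abstract edge.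

The step relation also lets a pair `q, q` fire from a single copy of `q`, which enlarges the
configuration. Sizes never decrease along steps, and `C_i^(n)`, `C_f^(n)` have the same size, so
no such step occurs on a run from `C_i^(n)` to `C_f^(n)`. -/

lemma flipTwo_apply {X : Type} [DecidableEq X] (γ : X → Bool) (x1 x2 x : X) :
    flipTwo γ x1 x2 x = (γ x ^^ (decide (x = x1) ^^ decide (x = x2))) := by
  unfold flipTwo
  by_cases h : x1 = x2
  · subst h; simp
  · by_cases h1 : x = x1 <;> by_cases h2 : x = x2 <;> simp_all

lemma Nat.even_iff_bodd_eq_false {n : ℕ} : Even n ↔ n.bodd = false := by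
  rw [Nat.even_iff, Nat.mod_two_of_bodd]
  cases n.bodd <;> simp

lemma Nat.bodd_eq_true_of_odd {n : ℕ} (hn : Odd n) : n.bodd = true := by
  simpa [Nat.even_iff_bodd_eq_false] using Nat.not_even_iff_odd.mpr hn

namespace Multiset

variable {α : Type*} [DecidableEq α]

lemma card_le_card_sub_add {u s t : Multiset α} (hst : card s = card t) :
    card u ≤ card (u - s + t) := by
  simpa [← hst] using card_le_card (le_tsub_add : u ≤ u - s + s)

lemma le_of_card_sub_add_le {u s t : Multiset α} (hst : card s = card t)
    (h : card (u - s + t) ≤ card u) : s ≤ u := by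
  have hu : u = u - s + s := eq_of_le_of_card_le le_tsub_add (by simpa [hst] using h)
  rw [hu]
  exact le_add_left _ _

lemma bodd_count_pair (q x y : α) :
    (count q {x, y}).bodd = (decide (q = x) ^^ decide (q = y)) := by
  rw [insert_eq_cons, count_cons, count_singleton, Nat.bodd_add]
  split_ifs <;> simp_all

lemma bodd_count_sub_add_pair {C : Multiset α} {x1 x2 : α} (y1 y2 q : α) (hle : {x1, x2} ≤ C) :
    (count q (C - {x1, x2} + {y1, y2})).bodd =
      ((count q C).bodd ^^ (decide (q = x1) ^^ decide (q = x2)) ^^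
        (decide (q = y1) ^^ decide (q = y2))) := by
  have hq := count_le_of_le q hle
  have hcount : count q (C - {x1, x2} + {y1, y2}) + count q {x1, x2} =
      count q C + count q {y1, y2} := by
    rw [count_add, count_sub]
    omega
  have hbodd := congrArg Nat.bodd hcount
  rw [Nat.bodd_add, Nat.bodd_add, ← Bool.xor_left_inj (z := (count q {x1, x2}).bodd),
    Bool.xor_assoc, Bool.xor_self, Bool.xor_false] at hbodd
  rw [hbodd, bodd_count_pair, bodd_count_pair, Bool.xor_right_comm]

end Multiset

namespace RVProtocol

variable {Q A : Type} {P : RVProtocol Q A}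

open Multiset

lemma IsConfig.eq_of_mem {C : Multiset Q} (hC : P.IsConfig C) {l l' : Q}
    (hl : P.isLeader l = true) (hl' : P.isLeader l' = true) (h : l ∈ C) (h' : l' ∈ C) :
    l = l' := by
  obtain ⟨x, hx⟩ := card_eq_one.mp hC
  have hmem : ∀ y, P.isLeader y = true → y ∈ C → y = x := fun y hy hyC => by
    simpa [hx] using (mem_filter_of_mem hyC hy : y ∈ C.filter (P.isLeader · = true))
  rw [hmem l hl h, hmem l' hl' h']

lemma IsConfig.isLeader_eq_false_of_pair_le {C : Multiset Q} (hC : P.IsConfig C) {x y : Q}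
    (hle : {x, y} ≤ C) (hx : P.isLeader x = true) : P.isLeader y = false := by
  by_contra hy
  have hy' : P.isLeader y = true := by simpa using hy
  have h2 := countP_le_of_le (P.isLeader · = true) hle
  rw [countP_eq_card_filter _ C, hC] at h2
  simp [insert_eq_cons, ← cons_zero, hx, hy'] at h2

variable [DecidableEq Q]

lemma IsConfig.count_eq_one {C : Multiset Q} (hC : P.IsConfig C) {l : Q}
    (hl : P.isLeader l = true) (h : l ∈ C) : count l C = 1 := by
  have hle : count l C ≤ 1 := by
    rw [← count_filter_of_pos (p := (P.isLeader · = true)) hl]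
    exact hC ▸ count_le_card _ _
  have := count_pos.mpr h
  omega

lemma IsConfig.sub_add {C s t : Multiset Q} (hC : P.IsConfig C) (hle : s ≤ C)
    (hst : s.map P.isLeader = t.map P.isLeader) : P.IsConfig (C - s + t) := by
  have hcount : countP (P.isLeader · = true) s = countP (P.isLeader · = true) t := by
    have := congrArg (countP (· = true)) hst
    rwa [countP_map, countP_map, ← countP_eq_card_filter, ← countP_eq_card_filter] at this
  have hsC := countP_le_of_le (P.isLeader · = true) hle
  unfold IsConfig at hC ⊢
  rw [← countP_eq_card_filter] at hC ⊢
  rw [countP_add, countP_sub hle]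
  omega

lemma interp_iff {c : P.AbsConf} {C : Multiset Q} :
    P.Interp c C ↔
      P.IsConfig C ∧ (c.1 : Q) ∈ C ∧ ∀ q : P.ProcState, c.2 q = (count (q : Q) C).bodd := by
  unfold Interp
  refine and_congr_right fun hC => and_congr ⟨fun h => count_pos.mp (by omega),
    hC.count_eq_one c.1.2⟩ (forall_congr' fun q => ?_)
  rw [Nat.even_iff_bodd_eq_false]
  cases c.2 q <;> cases (count (q : Q) C).bodd <;> simp

lemma exists_eoStep_sub_add_of_isLeader {c : P.AbsConf} {C : Multiset Q} (hc : P.Interp c C)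
    {a : A} {l l' q q' : Q} (hel : (l, RVAct.send a, l') ∈ P.E) (heq : (q, RVAct.send a, q') ∈ P.E)
    (hl : P.isLeader l = true) (hq : P.isLeader q = false) (hle : {l, q} ≤ C) :
    ∃ c', P.EOStep c c' ∧ P.Interp c' (C - {l, q} + {l', q'}) := by
  obtain ⟨hC, hmem, hpar⟩ := interp_iff.mp hc
  have hl' : P.isLeader l' = true := (P.hE _ hel).symm.trans hl
  have hq' : P.isLeader q' = false := (P.hE _ heq).symm.trans hq
  have hcl : (c.1 : Q) = l := hC.eq_of_mem c.1.2 hl hmem (mem_of_le hle (by simp))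
  refine ⟨(⟨l', hl'⟩, flipTwo c.2 ⟨q, hq⟩ ⟨q', hq'⟩), Or.inl ⟨a, _, _, hcl ▸ hel, heq, rfl⟩,
    interp_iff.mpr ⟨hC.sub_add hle (by simp [hl, hl', hq, hq']), by simp, fun p => ?_⟩⟩
  have hpl : (p : Q) ≠ l := fun h => by simpa [h, hl] using p.2
  have hpl' : (p : Q) ≠ l' := fun h => by simpa [h, hl'] using p.2
  dsimp only
  rw [bodd_count_sub_add_pair _ _ _ hle, flipTwo_apply, hpar]
  simp only [Subtype.ext_iff, decide_eq_false hpl, decide_eq_false hpl', Bool.false_xor,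
    Bool.xor_assoc]

lemma exists_eoStep_sub_add_of_not_isLeader {c : P.AbsConf} {C : Multiset Q}
    (hc : P.Interp c C) {a : A} {q1 q2 q1' q2' : Q} (he : (q1, RVAct.send a, q2) ∈ P.E)
    (he' : (q1', RVAct.send a, q2') ∈ P.E) (hq : P.isLeader q1 = false)
    (hq' : P.isLeader q1' = false) (hle : {q1, q1'} ≤ C) :
    ∃ c', P.EOStep c c' ∧ P.Interp c' (C - {q1, q1'} + {q2, q2'}) := by
  obtain ⟨hC, hmem, hpar⟩ := interp_iff.mp hc
  have hq2 : P.isLeader q2 = false := (P.hE _ he).symm.trans hq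
  have hq2' : P.isLeader q2' = false := (P.hE _ he').symm.trans hq'
  have hne : ∀ p, P.isLeader p = false → (c.1 : Q) ≠ p := fun p hp h => by
    simpa [h, hp] using c.1.2
  refine ⟨(c.1, flipTwo (flipTwo c.2 ⟨q1, hq⟩ ⟨q2, hq2⟩) ⟨q1', hq'⟩ ⟨q2', hq2'⟩),
    Or.inr ⟨rfl, a, _, _, _, _, he, he', rfl⟩,
    interp_iff.mpr ⟨hC.sub_add hle (by simp [hq, hq', hq2, hq2']), ?_, fun p => ?_⟩⟩
  · rw [← count_pos, count_add, count_sub]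
    simp [hne _ hq, hne _ hq', count_pos.mpr hmem]
  · dsimp only
    rw [bodd_count_sub_add_pair _ _ _ hle, flipTwo_apply, flipTwo_apply, hpar]
    simp only [Subtype.ext_iff, Bool.xor_assoc, Bool.xor_left_comm]

lemma exists_eoStep_sub_add (hsym : P.IsSymmetric) {c : P.AbsConf} {C : Multiset Q}
    (hc : P.Interp c C) {a : A} {q1 q2 q1' q2' : Q} (he : (q1, RVAct.recv a, q2) ∈ P.E)
    (he' : (q1', RVAct.send a, q2') ∈ P.E) (hle : {q1, q1'} ≤ C) :
    ∃ c', P.EOStep c c' ∧ P.Interp c' (C - {q1, q1'} + {q2, q2'}) := by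
  have hC := (interp_iff.mp hc).1
  replace he := (hsym _ _ _).mpr he
  cases h1 : P.isLeader q1
  · cases h1' : P.isLeader q1'
    · exact exists_eoStep_sub_add_of_not_isLeader hc he he' h1 h1' hle
    · rw [pair_comm q1, pair_comm q2]
      exact exists_eoStep_sub_add_of_isLeader hc he' he h1' h1 (pair_comm q1 q1' ▸ hle)
  · exact exists_eoStep_sub_add_of_isLeader hc he he' h1
      (hC.isLeader_eq_false_of_pair_le hle h1) hle

lemma Step.card_le {C C' : Multiset Q} (hs : P.Step C C') : card C ≤ card C' := by
  obtain ⟨a, q1, q2, q1', q2', -, -, -, -, -, rfl⟩ := hs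
  exact card_le_card_sub_add (by simp)

lemma Reach.card_le {C C' : Multiset Q} (h : P.Reach C C') : card C ≤ card C' := by
  induction h with
  | refl => rfl
  | tail _ hs ih => exact ih.trans hs.card_le

lemma exists_eoStep_of_step (hsym : P.IsSymmetric) {c : P.AbsConf} {C C' : Multiset Q}
    (hc : P.Interp c C) (hs : P.Step C C') (hcard : card C' ≤ card C) :
    ∃ c', P.EOStep c c' ∧ P.Interp c' C' := by
  obtain ⟨a, q1, q2, q1', q2', he, he', -, -, -, rfl⟩ := hs
  exact exists_eoStep_sub_add hsym hc he he' (le_of_card_sub_add_le (by simp) hcard)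

lemma exists_eoReach_of_reach (hsym : P.IsSymmetric) {c : P.AbsConf} {C C' : Multiset Q}
    (hc : P.Interp c C) (h : P.Reach C C') (hcard : card C' ≤ card C) :
    ∃ c', P.EOReach c c' ∧ P.Interp c' C' := by
  induction h with
  | refl => exact ⟨c, Relation.ReflTransGen.refl, hc⟩
  | tail hr hs ih =>
    have := Reach.card_le hr
    have := hs.card_le
    obtain ⟨c₁, hr₁, hc₁⟩ := ih (by omega)
    obtain ⟨c₂, hs₂, hc₂⟩ := exists_eoStep_of_step hsym hc₁ hs (by omega)
    exact ⟨c₂, hr₁.tail hs₂, hc₂⟩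

lemma interp_replicate_add_singleton_iff {p l : Q} (hp : P.isLeader p = false)
    (hl : P.isLeader l = true) (n : ℕ) (c : P.AbsConf) :
    P.Interp c (replicate n p + {l}) ↔
      c = (⟨l, hl⟩, fun q : P.ProcState => n.bodd && decide ((q : Q) = p)) := by
  have hC : P.IsConfig (replicate n p + {l}) := by
    simp only [IsConfig, filter_add, filter_singleton, hl, if_true]
    rw [filter_eq_nil.mpr fun x hx => by simp [eq_of_mem_replicate hx, hp]]
    rfl
  have hcount (q : P.ProcState) :
      count (q : Q) (replicate n p + {l}) = if (q : Q) = p then n else 0 := by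
    have hql : (q : Q) ≠ l := fun h => by simpa [h, hl] using q.2
    simp [count_replicate, hql, eq_comm]
  rw [interp_iff]
  constructor
  · rintro ⟨-, hmem, hpar⟩
    refine Prod.ext (Subtype.ext (hC.eq_of_mem c.1.2 hl hmem (by simp))) (funext fun q => ?_)
    rw [hpar, hcount]
    split_ifs <;> simp [*]
  · rintro rfl
    refine ⟨hC, by simp, fun q => ?_⟩
    rw [hcount]
    split_ifs <;> simp [*]

variable (P) {n : ℕ} {c : P.AbsConf}

lemma interp_Ci_iff_of_even (hn : Even n) : P.Interp c (P.Ci n) ↔ c = P.absIE := by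
  rw [Ci, interp_replicate_add_singleton_iff P.hqi P.hqiL, Nat.even_iff_bodd_eq_false.mp hn]
  rfl

lemma interp_Ci_iff_of_odd (hn : Odd n) : P.Interp c (P.Ci n) ↔ c = P.absIO := by
  rw [Ci, interp_replicate_add_singleton_iff P.hqi P.hqiL, Nat.bodd_eq_true_of_odd hn]
  rfl

lemma interp_Cf_iff_of_even (hn : Even n) : P.Interp c (P.Cf n) ↔ c = P.absFE := by
  rw [Cf, interp_replicate_add_singleton_iff P.hqf P.hqfL, Nat.even_iff_bodd_eq_false.mp hn]
  rfl

lemma interp_Cf_iff_of_odd (hn : Odd n) : P.Interp c (P.Cf n) ↔ c = P.absFO := by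
  rw [Cf, interp_replicate_add_singleton_iff P.hqf P.hqfL, Nat.bodd_eq_true_of_odd hn]
  rfl

end RVProtocol

theorem eo_abstraction_complete_general {Q A : Type} [DecidableEq Q]
    (P : RVProtocol Q A) (hsym : P.IsSymmetric) (n : ℕ)
    (h : P.Reach (P.Ci n) (P.Cf n)) :
    (Even n → P.EOReach P.absIE P.absFE) ∧ (Odd n → P.EOReach P.absIO P.absFO) := by
  have hcard : Multiset.card (P.Cf n) ≤ Multiset.card (P.Ci n) := by
    simp [RVProtocol.Ci, RVProtocol.Cf]
  refine ⟨fun hn => ?_, fun hn => ?_⟩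
  · obtain ⟨c, hreach, hc⟩ :=
      P.exists_eoReach_of_reach hsym ((P.interp_Ci_iff_of_even hn).mpr rfl) h hcard
    rwa [(P.interp_Cf_iff_of_even hn).mp hc] at hreach
  · obtain ⟨c, hreach, hc⟩ :=
      P.exists_eoReach_of_reach hsym ((P.interp_Ci_iff_of_odd hn).mpr rfl) h hcard
    rwa [(P.interp_Cf_iff_of_odd hn).mp hc] at hreach

/-- **Completeness of the even-odd abstraction.** If `C_i^{(n)} →* C_f^{(n)}`
in a symmetric rendez-vous protocol, then `(q_i^L,γ_i^E) ⇝* (q_f^L,γ_f^E)` when `n` is even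
and `(q_i^L,γ_i^O) ⇝* (q_f^L,γ_f^O)` when `n` is odd. -/
theorem eo_abstraction_complete {Q A : Type} [Fintype Q] [Fintype A] [DecidableEq Q]
    (P : RVProtocol Q A) (hsym : P.IsSymmetric) (n : ℕ)
    (h : P.Reach (P.Ci n) (P.Cf n)) :
    (Even n → P.EOReach P.absIE P.absFE) ∧ (Odd n → P.EOReach P.absIO P.absFO) :=
  eo_abstraction_complete_general P hsym n h
end

section
/- Let P be a symmetric rendez-vous protocol in which, for every q ∈ Q_P, the underlying graph has a path from q_i to q and a path from q to q_f. If (q_i^L, γ_i^E) ⇝* (q^L, γ), then there exists an even n ∈ ℕ \ {0} and a configuration C ∈ [[(q^L, γ)]] such that C_i^(n) →* C. Likewise, if (q_i^L, γ_i^O) ⇝* (q^L, γ), then there exists an odd n ∈ ℕ \ {0} and a configuration C ∈ [[(q^L, γ)]] such that C_i^(n) →* C. -/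
namespace RVProtocol

variable {Q A : Type} [DecidableEq Q] (P : RVProtocol Q A)

lemma count_pair (q x y : Q) :
    ({x, y} : Multiset Q).count q = (if q = x then 1 else 0) + (if q = y then 1 else 0) := by
  simp [Multiset.insert_eq_cons, Multiset.count_cons, Multiset.count_singleton]
  split_ifs <;> rfl

lemma pair_le {x y : Q} {C : Multiset Q} (hx : 0 < C.count x) (hy : 0 < C.count y)
    (hxy : x = y → 2 ≤ C.count x) : ({x, y} : Multiset Q) ≤ C := by
  rw [Multiset.le_iff_count]
  intro q
  rw [count_pair]
  rcases eq_or_ne x y with e | e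
  · subst e
    have h2 := hxy rfl
    split_ifs with u
    · rw [u]; omega
    · omega
  · split_ifs with u v v
    · exact absurd (u.symm.trans v) e
    · rw [u]; omega
    · rw [v]; omega
    · omega

lemma count_update {C : Multiset Q} {x y : Q} (h : ({x, y} : Multiset Q) ≤ C) (z w q : Q) :
    (C - {x, y} + {z, w}).count q + ((if q = x then 1 else 0) + (if q = y then 1 else 0))
      = C.count q + ((if q = z then 1 else 0) + (if q = w then 1 else 0)) := by
  have hq := Multiset.le_iff_count.mp h q
  rw [count_pair] at hq
  rw [Multiset.count_add, Multiset.count_sub, count_pair, count_pair]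
  omega

lemma isConfig_update {C : Multiset Q} {x y z w : Q} (hC : P.IsConfig C)
    (h : ({x, y} : Multiset Q) ≤ C) (hxz : P.isLeader x = P.isLeader z)
    (hyw : P.isLeader y = P.isLeader w) : P.IsConfig (C - {x, y} + {z, w}) := by
  have hcard : ∀ u v : Q, (({u, v} : Multiset Q).filter (fun q => P.isLeader q = true)).card
      = (if P.isLeader u = true then 1 else 0) + (if P.isLeader v = true then 1 else 0) := by
    intro u v
    simp [Multiset.insert_eq_cons, Multiset.filter_cons, Multiset.filter_singleton]
    split_ifs <;> simp
  have hle := Multiset.filter_le_filter (fun q => P.isLeader q = true) h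
  have hb := Multiset.card_le_card hle
  unfold IsConfig at *
  rw [Multiset.filter_add, Multiset.filter_sub, Multiset.card_add, Multiset.card_sub hle,
    hcard, hcard, hxz, hyw] at *
  omega

lemma step_of {C : Multiset Q} {a : A} {x y z w : Q}
    (hr : (x, RVAct.recv a, y) ∈ P.E) (hs : (z, RVAct.send a, w) ∈ P.E)
    (h : ({x, z} : Multiset Q) ≤ C) : P.Step C (C - {x, z} + {y, w}) := by
  have h1 := Multiset.le_iff_count.mp h x
  have h2 := Multiset.le_iff_count.mp h z
  rw [count_pair] at h1 h2
  refine ⟨a, x, y, z, w, hr, hs, ?_, ?_, ?_, rfl⟩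
  · by_cases e : x = z <;> simp [e] at h1 ⊢ <;> omega
  · by_cases e : z = x <;> simp [e] at h2 ⊢ <;> omega
  · by_cases e : x = z
    · subst e; simp at h1; omega
    · have e' : ¬ z = x := fun hh => e hh.symm
      simp [e, e'] at h1 h2; omega

lemma pair_reach (hsym : P.IsSymmetric) {x y : Q} (h : Relation.ReflTransGen P.Adj x y) :
    ∀ C0 : Multiset Q, P.Reach (C0 + {x, x}) (C0 + {y, y}) := by
  induction h using Relation.ReflTransGen.head_induction_on with
  | refl => intro C0; exact Relation.ReflTransGen.refl
  | head hadj _ ih =>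
    rename_i u v _
    intro C0
    obtain ⟨a, he⟩ := hadj
    have hle : ({u, u} : Multiset Q) ≤ C0 + {u, u} := Multiset.le_add_left _ _
    have hst := P.step_of ((hsym _ _ _).mp he) he hle
    rw [add_tsub_cancel_right] at hst
    exact Relation.ReflTransGen.head hst (ih C0)

lemma pairs_reach (hsym : P.IsSymmetric) {x y : Q} (h : Relation.ReflTransGen P.Adj x y) (j : ℕ) :
    ∀ C0 : Multiset Q,
      P.Reach (C0 + Multiset.replicate (2 * j) x) (C0 + Multiset.replicate (2 * j) y) := by
  induction j with
  | zero =>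
    intro C0
    simp only [Nat.mul_zero, Multiset.replicate_zero, add_zero]
    exact Relation.ReflTransGen.refl
  | succ j ih =>
    intro C0
    have hx : C0 + Multiset.replicate (2 * (j + 1)) x
        = (C0 + {x, x}) + Multiset.replicate (2 * j) x := by
      have : 2 * (j + 1) = 2 * j + 2 := by ring
      rw [this, Multiset.replicate_add]
      have h2 : (Multiset.replicate 2 x : Multiset Q) = {x, x} := by
        simp [Multiset.insert_eq_cons, Multiset.replicate_succ]
      rw [h2]; ac_rfl
    have hy : C0 + Multiset.replicate (2 * (j + 1)) y
        = (C0 + Multiset.replicate (2 * j) y) + {y, y} := by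
      have : 2 * (j + 1) = 2 * j + 2 := by ring
      rw [this, Multiset.replicate_add]
      have h2 : (Multiset.replicate 2 y : Multiset Q) = {y, y} := by
        simp [Multiset.insert_eq_cons, Multiset.replicate_succ]
      rw [h2]; ac_rfl
    rw [hx, hy]
    have step1 := ih (C0 + {x, x})
    have hmid : (C0 + {x, x}) + Multiset.replicate (2 * j) y
        = (C0 + Multiset.replicate (2 * j) y) + {x, x} := by ac_rfl
    have step2 := P.pair_reach hsym h (C0 + Multiset.replicate (2 * j) y)
    rw [hmid] at step1
    exact Relation.ReflTransGen.trans step1 step2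

lemma leader_count {C : Multiset Q} (hC : P.IsConfig C) {qL : Q} (hL : P.isLeader qL = true)
    (h1 : 0 < C.count qL) {q : Q} (hq : P.isLeader q = true) (hne : q ≠ qL) : C.count q = 0 := by
  have hmem : qL ∈ C.filter (fun q => P.isLeader q = true) :=
    Multiset.mem_filter.mpr ⟨Multiset.count_pos.mp h1, by simp [hL]⟩
  obtain ⟨x, hx⟩ := Multiset.card_eq_one.mp hC
  rw [hx] at hmem
  have hxq : x = qL := (Multiset.mem_singleton.mp hmem).symm
  subst hxq
  have h2 : C.count q = (C.filter (fun q => P.isLeader q = true)).count q := by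
    rw [Multiset.count_filter]; simp [hq]
  rw [h2, hx, Multiset.count_singleton, if_neg hne]

lemma flipTwo_apply' {X : Type} [DecidableEq X] (γ : X → Bool) (x1 x2 x : X) :
    flipTwo γ x1 x2 x = xor (γ x) (xor (decide (x = x1)) (decide (x = x2))) := by
  unfold flipTwo
  by_cases h : x1 = x2
  · subst h; simp
  · rw [if_neg h]
    have h' : ¬ x2 = x1 := fun e => h e.symm
    by_cases e1 : x = x1
    · have e2 : ¬ x = x2 := fun e2 => h (e1.symm.trans e2)
      simp [e1, e2, h]
    · by_cases e2 : x = x2 <;> simp [e1, e2, h, h']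

lemma base_reach [Fintype Q] (hsym : P.IsSymmetric) (hconn : P.Connected) (m : Q → ℕ) :
    ∃ (k : ℕ) (D : Multiset Q),
      (∀ q : Q, P.isLeader q = true → q ∉ D) ∧
      (∀ q : Q, P.isLeader q = false → m q ≤ D.count q ∧ D.count q % 2 = 0) ∧
      D.card = 2 * k ∧
      ∀ C0 : Multiset Q, P.Reach (C0 + Multiset.replicate (2 * k) P.qi) (C0 + D) := by
  suffices h : ∀ s : Finset Q, (∀ q ∈ s, P.isLeader q = false) →
      ∃ (k : ℕ) (D : Multiset Q), (∀ q : Q, q ∈ D → q ∈ s) ∧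
        (∀ q ∈ s, m q ≤ D.count q ∧ D.count q % 2 = 0) ∧
        D.card = 2 * k ∧
        ∀ C0 : Multiset Q, P.Reach (C0 + Multiset.replicate (2 * k) P.qi) (C0 + D) by
    obtain ⟨k, D, hmem, hcnt, hcard, hreach⟩ :=
      h (Finset.univ.filter fun q => P.isLeader q = false) (by intro q hq; simpa using hq)
    refine ⟨k, D, ?_, ?_, hcard, hreach⟩
    · intro q hq hmemD
      have h2 := hmem q hmemD
      simp at h2
      rw [hq] at h2; exact Bool.noConfusion h2
    · intro q hq
      exact hcnt q (by simp [hq])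
  intro s
  induction s using Finset.induction_on with
  | empty =>
    intro _
    refine ⟨0, 0, by simp, by simp, by simp, fun C0 => ?_⟩
    simp only [Nat.mul_zero, Multiset.replicate_zero, add_zero]
    exact Relation.ReflTransGen.refl
  | @insert a s ha ih =>
    intro hproc
    have hs : ∀ q ∈ s, P.isLeader q = false := fun q hq => hproc q (Finset.mem_insert_of_mem hq)
    obtain ⟨k, D, hmem, hcnt, hcard, hreach⟩ := ih hs
    have hpa : P.isLeader a = false := hproc a (Finset.mem_insert_self a s)
    refine ⟨k + m a, D + Multiset.replicate (2 * m a) a, ?_, ?_, ?_, ?_⟩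
    · intro q hqmem
      rw [Multiset.mem_add] at hqmem
      rcases hqmem with h | h
      · exact Finset.mem_insert_of_mem (hmem q h)
      · rw [Multiset.eq_of_mem_replicate h]; exact Finset.mem_insert_self a s
    · intro q hqins
      rw [Multiset.count_add, Multiset.count_replicate]
      rcases Finset.mem_insert.mp hqins with rfl | hqs
      · have hnd : q ∉ D := fun hd => ha (hmem q hd)
        rw [Multiset.count_eq_zero.mpr hnd]
        simp; omega
      · have hne : q ≠ a := fun e => ha (e ▸ hqs)
        have := hcnt q hqs
        rw [if_neg (Ne.symm hne)]
        omega
    · rw [Multiset.card_add, Multiset.card_replicate, hcard]; ring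
    · intro C0
      have e1 : C0 + Multiset.replicate (2 * (k + m a)) P.qi
          = (C0 + Multiset.replicate (2 * m a) P.qi) + Multiset.replicate (2 * k) P.qi := by
        rw [show 2 * (k + m a) = 2 * k + 2 * m a by ring, Multiset.replicate_add]; ac_rfl
      have r1 : P.Reach (C0 + Multiset.replicate (2 * (k + m a)) P.qi)
          ((C0 + D) + Multiset.replicate (2 * m a) P.qi) := by
        rw [e1, show (C0 + D) + Multiset.replicate (2 * m a) P.qi
          = (C0 + Multiset.replicate (2 * m a) P.qi) + D from by ac_rfl]
        exact hreach _
      have r2 : P.Reach ((C0 + D) + Multiset.replicate (2 * m a) P.qi)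
          (C0 + (D + Multiset.replicate (2 * m a) a)) := by
        rw [show C0 + (D + Multiset.replicate (2 * m a) a)
          = (C0 + D) + Multiset.replicate (2 * m a) a from by ac_rfl]
        exact P.pairs_reach hsym (hconn a hpa).1 (m a) (C0 + D)
      exact r1.trans r2

lemma proc_ne_lead (q : P.ProcState) (l : P.LeadState) : (q : Q) ≠ (l : Q) := by
  intro h
  have h1 := q.2
  rw [h, l.2] at h1
  exact Bool.noConfusion h1

lemma parity_flip {n n' : ℕ} {p : Bool} {P1 P2 : Prop} [Decidable P1] [Decidable P2]
    (hq : n % 2 = 0 ↔ p = false)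
    (hcu : n' + (if P1 then 1 else 0) = n + (if P2 then 1 else 0)) :
    (n' % 2 = 0 ↔ xor p (xor (decide P1) (decide P2)) = false) := by
  by_cases h1 : P1 <;> by_cases h2 : P2 <;> cases p <;> simp_all <;> omega

lemma parity_flip2 {n n' : ℕ} {p : Bool} {P1 P2 P3 P4 : Prop}
    [Decidable P1] [Decidable P2] [Decidable P3] [Decidable P4]
    (hq : n % 2 = 0 ↔ p = false)
    (hcu : n' + ((if P1 then 1 else 0) + (if P3 then 1 else 0))
      = n + ((if P2 then 1 else 0) + (if P4 then 1 else 0))) :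
    (n' % 2 = 0 ↔ xor (xor p (xor (decide P1) (decide P2))) (xor (decide P3) (decide P4)) = false) := by
  by_cases h1 : P1 <;> by_cases h2 : P2 <;> by_cases h3 : P3 <;> by_cases h4 : P4 <;>
    cases p <;> simp_all <;> omega

lemma step_sim (hsym : P.IsSymmetric) {b c : P.AbsConf} (hstep : P.EOStep b c)
    {C : Multiset Q} (hcfg : P.IsConfig C) (hlead : C.count (b.1 : Q) = 1)
    (hpar : ∀ q : P.ProcState, Even (C.count (q : Q)) ↔ b.2 q = false)
    (hbig : ∀ q : Q, P.isLeader q = false → 2 ≤ C.count q) :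
    ∃ C' : Multiset Q, P.Step C C' ∧ P.Interp c C' ∧
      ∀ q : Q, P.isLeader q = false → C.count q ≤ C'.count q + 2 := by
  rcases hstep with ⟨a, q1, q2, hLe, hPe, hγ⟩ | ⟨hL, a, q1, q2, q3, q4, h12, h34, hγ⟩
  · -- leader case
    have h2q1 := hbig _ q1.2
    have hne1 : (q1 : Q) ≠ (b.1 : Q) := P.proc_ne_lead q1 b.1
    have hle : ({(q1 : Q), (b.1 : Q)} : Multiset Q) ≤ C :=
      pair_le (by omega) (by omega) (fun h => absurd h hne1)
    refine ⟨C - {(q1 : Q), (b.1 : Q)} + {(q2 : Q), (c.1 : Q)},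
      P.step_of ((hsym _ _ _).mp hPe) hLe hle, ⟨?_, ?_, ?_⟩, ?_⟩
    · exact P.isConfig_update hcfg hle (q1.2.trans q2.2.symm) ((b.1).2.trans (c.1).2.symm)
    · have hcu := count_update hle (q2 : Q) (c.1 : Q) (c.1 : Q)
      have e1 : ¬ ((c.1 : Q) = (q1 : Q)) := fun h => P.proc_ne_lead q1 c.1 h.symm
      have e2 : ¬ ((c.1 : Q) = (q2 : Q)) := fun h => P.proc_ne_lead q2 c.1 h.symm
      rw [if_neg e1, if_neg e2, if_pos rfl] at hcu
      by_cases e : (c.1 : Q) = (b.1 : Q)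
      · rw [if_pos e] at hcu
        have hc1 : C.count (c.1 : Q) = 1 := by rw [e]; exact hlead
        omega
      · rw [if_neg e] at hcu
        have h0 : C.count (c.1 : Q) = 0 :=
          P.leader_count hcfg (b.1).2 (by omega) (c.1).2 e
        omega
    · intro q
      have hcu := count_update hle (q2 : Q) (c.1 : Q) (q : Q)
      have eb : ¬ ((q : Q) = (b.1 : Q)) := P.proc_ne_lead q b.1
      have ec : ¬ ((q : Q) = (c.1 : Q)) := P.proc_ne_lead q c.1
      rw [if_neg eb, if_neg ec] at hcu
      have hq := hpar q
      rw [hγ, flipTwo_apply']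
      simp only [Subtype.coe_inj, add_zero] at hcu
      rw [Nat.even_iff] at hq ⊢
      exact parity_flip hq hcu
    · intro q hq
      have hcu := count_update hle (q2 : Q) (c.1 : Q) q
      split_ifs at hcu <;> omega
  · -- process case
    have h2q1 := hbig _ q1.2
    have h2q3 := hbig _ q3.2
    have hle : ({(q1 : Q), (q3 : Q)} : Multiset Q) ≤ C :=
      pair_le (by omega) (by omega) (fun _ => by omega)
    refine ⟨C - {(q1 : Q), (q3 : Q)} + {(q2 : Q), (q4 : Q)},
      P.step_of ((hsym _ _ _).mp h12) h34 hle, ⟨?_, ?_, ?_⟩, ?_⟩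
    · exact P.isConfig_update hcfg hle (q1.2.trans q2.2.symm) (q3.2.trans q4.2.symm)
    · have hcu := count_update hle (q2 : Q) (q4 : Q) (c.1 : Q)
      have e1 : ¬ ((c.1 : Q) = (q1 : Q)) := fun h => P.proc_ne_lead q1 c.1 h.symm
      have e2 : ¬ ((c.1 : Q) = (q2 : Q)) := fun h => P.proc_ne_lead q2 c.1 h.symm
      have e3 : ¬ ((c.1 : Q) = (q3 : Q)) := fun h => P.proc_ne_lead q3 c.1 h.symm
      have e4 : ¬ ((c.1 : Q) = (q4 : Q)) := fun h => P.proc_ne_lead q4 c.1 h.symm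
      rw [if_neg e1, if_neg e2, if_neg e3, if_neg e4] at hcu
      rw [hL] at hlead
      omega
    · intro q
      have hcu := count_update hle (q2 : Q) (q4 : Q) (q : Q)
      have hq := hpar q
      rw [hγ, flipTwo_apply', flipTwo_apply']
      simp only [Subtype.coe_inj] at hcu
      rw [Nat.even_iff] at hq ⊢
      exact parity_flip2 hq hcu
    · intro q hq
      have hcu := count_update hle (q2 : Q) (q4 : Q) q
      split_ifs at hcu <;> omega

lemma sim_main (hsym : P.IsSymmetric) (npred : ℕ → Prop) {c0 c : P.AbsConf}
    (h : P.EOReach c0 c)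
    (hbase : ∀ m : Q → ℕ, ∃ n, npred n ∧ ∃ C, P.Interp c0 C ∧
      (∀ q : Q, P.isLeader q = false → m q ≤ C.count q) ∧ P.Reach (P.Ci n) C) :
    ∀ m : Q → ℕ, ∃ n, npred n ∧ ∃ C, P.Interp c C ∧
      (∀ q : Q, P.isLeader q = false → m q ≤ C.count q) ∧ P.Reach (P.Ci n) C := by
  induction h with
  | refl => exact hbase
  | tail hsteps hstep ih =>
    intro m
    obtain ⟨n, hn, C, ⟨hcfg, hlead, hparr⟩, hcnt, hreach⟩ := ih (fun q => m q + 2)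
    obtain ⟨C', hstepC, hI', hbound⟩ := P.step_sim hsym hstep hcfg hlead hparr
      (fun q hq => by have := hcnt q hq; omega)
    exact ⟨n, hn, C', hI',
      fun q hq => by have := hcnt q hq; have := hbound q hq; omega,
      Relation.ReflTransGen.tail hreach hstepC⟩

end RVProtocol


/-- In a symmetric rendez-vous protocol whose every process state lies
on a path from `q_i` to `q_f`: if `(q_i^L,γ_i^E) ⇝* (q^L,γ)` then some configuration of
`[[(q^L,γ)]]` is reachable from `C_i^{(n)}` for some even `n ≠ 0`; and if
`(q_i^L,γ_i^O) ⇝* (q^L,γ)` then some configuration of `[[(q^L,γ)]]` is reachable from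
`C_i^{(n)}` for some odd `n ≠ 0`. -/
theorem eo_abstraction_pre_sound {Q A : Type} [Fintype Q] [Fintype A] [DecidableEq Q]
    (P : RVProtocol Q A) (hsym : P.IsSymmetric) (hconn : P.Connected)
    (c : P.AbsConf) :
    (P.EOReach P.absIE c →
      ∃ n : ℕ, n ≠ 0 ∧ Even n ∧ ∃ C : Multiset Q, P.Interp c C ∧ P.Reach (P.Ci n) C) ∧
    (P.EOReach P.absIO c →
      ∃ n : ℕ, n ≠ 0 ∧ Odd n ∧ ∃ C : Multiset Q, P.Interp c C ∧ P.Reach (P.Ci n) C) := by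
  classical
  have hqine : P.qi ≠ P.qiL := by
    intro h; have h1 := P.hqi; rw [h, P.hqiL] at h1; exact Bool.noConfusion h1
  constructor
  · intro h
    have hbase : ∀ m : Q → ℕ, ∃ n, (n ≠ 0 ∧ Even n) ∧ ∃ C, P.Interp P.absIE C ∧
        (∀ q : Q, P.isLeader q = false → m q ≤ C.count q) ∧ P.Reach (P.Ci n) C := by
      intro m
      obtain ⟨k, D, hnl, hcnt, hcard, hreach⟩ := P.base_reach hsym hconn (fun q => m q + 2)
      have hqiD := hcnt P.qi P.hqi
      have hk : 0 < k := by
        have := Multiset.count_le_card P.qi D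
        omega
      have hD0 : D.filter (fun q => P.isLeader q = true) = 0 :=
        Multiset.filter_eq_nil.mpr (fun a ha hT => hnl a hT ha)
      refine ⟨2 * k, ⟨by omega, ⟨k, by ring⟩⟩, {P.qiL} + D, ⟨?_, ?_, ?_⟩, ?_, ?_⟩
      · unfold RVProtocol.IsConfig
        rw [Multiset.filter_add, hD0]
        simp [Multiset.filter_singleton, P.hqiL]
      · show Multiset.count P.qiL ({P.qiL} + D) = 1
        rw [Multiset.count_add, Multiset.count_singleton, if_pos rfl,
          Multiset.count_eq_zero.mpr (hnl _ P.hqiL)]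
      · intro q
        have hne : (q : Q) ≠ P.qiL := by
          intro hq; have h1 := q.2; rw [hq, P.hqiL] at h1; exact Bool.noConfusion h1
        have hev := (hcnt (q : Q) q.2).2
        show Even (Multiset.count (q : Q) ({P.qiL} + D)) ↔ P.absIE.2 q = false
        rw [Multiset.count_add, Multiset.count_singleton, if_neg hne]
        simp only [RVProtocol.absIE]
        rw [Nat.even_iff]
        simp only [zero_add]
        simp; omega
      · intro q hq
        have := (hcnt q hq).1
        rw [Multiset.count_add]
        omega
      · have hr := hreach {P.qiL}
        have he : P.Ci (2 * k) = {P.qiL} + Multiset.replicate (2 * k) P.qi := add_comm _ _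
        rw [he]; exact hr
    obtain ⟨n, ⟨h0, hev⟩, C, hI, _, hr⟩ :=
      P.sim_main hsym (fun n => n ≠ 0 ∧ Even n) h hbase (fun _ => 0)
    exact ⟨n, h0, hev, C, hI, hr⟩
  · intro h
    have hbase : ∀ m : Q → ℕ, ∃ n, Odd n ∧ ∃ C, P.Interp P.absIO C ∧
        (∀ q : Q, P.isLeader q = false → m q ≤ C.count q) ∧ P.Reach (P.Ci n) C := by
      intro m
      obtain ⟨k, D, hnl, hcnt, hcard, hreach⟩ := P.base_reach hsym hconn (fun q => m q + 2)
      have hD0 : D.filter (fun q => P.isLeader q = true) = 0 :=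
        Multiset.filter_eq_nil.mpr (fun a ha hT => hnl a hT ha)
      refine ⟨2 * k + 1, ⟨k, by ring⟩, ({P.qiL} + {P.qi}) + D, ⟨?_, ?_, ?_⟩, ?_, ?_⟩
      · unfold RVProtocol.IsConfig
        rw [Multiset.filter_add, Multiset.filter_add, hD0]
        simp [Multiset.filter_singleton, P.hqiL, P.hqi]
      · show Multiset.count P.qiL (({P.qiL} + {P.qi}) + D) = 1
        rw [Multiset.count_add, Multiset.count_add, Multiset.count_singleton,
          Multiset.count_singleton, if_pos rfl, if_neg (Ne.symm hqine),
          Multiset.count_eq_zero.mpr (hnl _ P.hqiL)]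
      · intro q
        have hne : (q : Q) ≠ P.qiL := by
          intro hq; have h1 := q.2; rw [hq, P.hqiL] at h1; exact Bool.noConfusion h1
        have hev := (hcnt (q : Q) q.2).2
        show Even (Multiset.count (q : Q) (({P.qiL} + {P.qi}) + D)) ↔ P.absIO.2 q = false
        rw [Multiset.count_add, Multiset.count_add, Multiset.count_singleton,
          Multiset.count_singleton, if_neg hne]
        simp only [RVProtocol.absIO]
        rw [Nat.even_iff]
        by_cases e : (q : Q) = P.qi
        · rw [e] at hev; simp [e]; omega
        · simp [e]; omega
      · intro q hq
        have := (hcnt q hq).1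
        rw [Multiset.count_add]
        omega
      · have hr := hreach ({P.qiL} + {P.qi})
        have he : P.Ci (2 * k + 1) = ({P.qiL} + {P.qi}) + Multiset.replicate (2 * k) P.qi := by
          show Multiset.replicate (2 * k + 1) P.qi + {P.qiL} = _
          ext x
          by_cases e1 : x = P.qi <;> by_cases e2 : x = P.qiL <;>
            simp [e1, e2, Multiset.count_replicate, Multiset.count_singleton,
              Multiset.count_add, hqine, Ne.symm hqine] <;> omega
        rw [he]; exact hr
    obtain ⟨n, hodd, C, hI, _, hr⟩ := P.sim_main hsym Odd h hbase (fun _ => 0)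
    have hn0 : n ≠ 0 := by rcases hodd with ⟨j, rfl⟩; omega
    exact ⟨n, hn0, hodd, C, hI, hr⟩
end
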